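/- arXiv:math/9912106 — 3 statements merged into one kernel-verified Lean document; each statement's English description precedes it below -/
import Mathlib

section
/- Let V be a free graded module (over a ring where needed factorials act appropriately) and let Γ^k(V) ⊆ T_C^k(V) denote the submodule of elements fixed by the signed action of the symmetric group S_k. Then Γ(V) = ⊕_k Γ^k(V) is closed under the shuffle product of T_C(V), i.e., it is a subalgebra of the shuffle Hopf algebra. -/
/-!
The shuffles are left coset representatives of the Young subgroup `S_j × S_k` (the image of
`blockPerm`) in `S_{j+k}`: a permutation `ρ` becomes a shuffle after sorting its values on each
block, i.e. `ρ * blockPerm α β` is a shuffle for suitable `α, β`, and this shuffle is unique since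
a shuffle is increasing on each block. For a vector `z` fixed by a subgroup `H ≤ G`, the sum of
`s • z` over a left transversal of `H` is the sum of `gH ↦ g • z` over `G ⧸ H`, which is
`G`-invariant because `G` permutes `G ⧸ H`.
-/

/-- A `(j,k)`-shuffle: a permutation of `Fin (j+k)` which is increasing on the first
`j` positions and on the last `k` positions. -/
def IsShuffle (j k : ℕ) (σ : Equiv.Perm (Fin (j + k))) : Prop :=
  (∀ a b : Fin (j + k), (a : ℕ) < (b : ℕ) → (b : ℕ) < j → σ a < σ b) ∧
  (∀ a b : Fin (j + k), j ≤ (a : ℕ) → (a : ℕ) < (b : ℕ) → σ a < σ b)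

/-- The block permutation `σ ⊕ τ` of `Fin (j + k)`. -/
def blockPerm {j k : ℕ} (σ : Equiv.Perm (Fin j)) (τ : Equiv.Perm (Fin k)) :
    Equiv.Perm (Fin (j + k)) :=
  finSumFinEquiv.permCongr (Equiv.sumCongr σ τ)

section Transversal

variable {G M F : Type*} [Group G] [AddCommMonoid M] [FunLike F M M] [AddMonoidHomClass F M M]
  {H : Subgroup G} {S : Finset G}

theorem Subgroup.IsComplement.act_sum_eq_sum_of_fixed (hS : IsComplement (S : Set G) H)
    (act : G → F) (hmul : ∀ g h m, act (g * h) m = act g (act h m))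
    {z : M} (hz : ∀ h ∈ H, act h z = z) (g : G) :
    act g (∑ s ∈ S, act s z) = ∑ s ∈ S, act s z := by
  classical
  have : Fintype (G ⧸ H) := Fintype.ofEquiv _ hS.leftQuotientEquiv.symm
  set f : G ⧸ H → M := fun q ↦ act (hS.leftQuotientEquiv q : G) z
  have act_eq_rep : ∀ g : G, act g z = f g := fun g ↦
    calc act g z = act (hS.leftQuotientEquiv g * ((hS.leftQuotientEquiv g : G)⁻¹ * g)) z := by
          rw [mul_inv_cancel_left]
      _ = f g := by rw [hmul]; exact congrArg _ (hz _ (hS.inv_toLeftFun_mul_mem g))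
  have sum_eq : ∑ s ∈ S, act s z = ∑ q, f q :=
    (Finset.sum_coe_sort S _).symm.trans (Equiv.sum_comp hS.leftQuotientEquiv _).symm
  calc act g (∑ s ∈ S, act s z) = ∑ q, f (g • q) := by
        rw [sum_eq, map_sum]
        refine Finset.sum_congr rfl fun q _ ↦ ?_
        rw [← hmul, act_eq_rep]
        conv_rhs => rw [← hS.quotientGroupMk_leftQuotientEquiv q]
        rfl
    _ = ∑ s ∈ S, act s z := by rw [sum_eq]; exact Equiv.sum_comp (MulAction.toPerm g) f

end Transversal

theorem Tuple.strictMono_comp_sort {n : ℕ} {α : Type*} [LinearOrder α] {f : Fin n → α}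
    (hf : Function.Injective f) : StrictMono (f ∘ Tuple.sort f) :=
  (Tuple.monotone_sort f).strictMono_of_injective (hf.comp (Tuple.sort f).injective)

section Shuffle

open Equiv

variable {j k : ℕ}

def blockPermHom (j k : ℕ) : Perm (Fin j) × Perm (Fin k) →* Perm (Fin (j + k)) :=
  (finSumFinEquiv.permCongrHom : Perm (Fin j ⊕ Fin k) ≃* _).toMonoidHom.comp
    (Perm.sumCongrHom (Fin j) (Fin k))

@[simp]
theorem blockPermHom_apply (α : Perm (Fin j)) (β : Perm (Fin k)) :
    blockPermHom j k (α, β) = blockPerm α β :=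
  rfl

@[simp]
theorem blockPerm_castAdd (α : Perm (Fin j)) (β : Perm (Fin k)) (i : Fin j) :
    blockPerm α β (Fin.castAdd k i) = Fin.castAdd k (α i) := by
  simp [blockPerm, Equiv.permCongr_apply]

@[simp]
theorem blockPerm_natAdd (α : Perm (Fin j)) (β : Perm (Fin k)) (i : Fin k) :
    blockPerm α β (Fin.natAdd j i) = Fin.natAdd j (β i) := by
  simp [blockPerm, Equiv.permCongr_apply]

theorem isShuffle_iff {σ : Perm (Fin (j + k))} :
    IsShuffle j k σ ↔ StrictMono (σ ∘ Fin.castAdd k) ∧ StrictMono (σ ∘ Fin.natAdd j) := by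
  refine ⟨fun ⟨h₁, h₂⟩ ↦ ⟨fun a b hab ↦ h₁ _ _ hab b.isLt, fun a b hab ↦ ?_⟩,
    fun ⟨h₁, h₂⟩ ↦ ⟨fun a b hab hb ↦ ?_, fun a b ha hab ↦ ?_⟩⟩
  · exact h₂ _ _ (Nat.le_add_right j a) (Nat.add_lt_add_left hab j)
  · exact h₁ (a := ⟨a, hab.trans hb⟩) (b := ⟨b, hb⟩) hab
  · obtain ⟨a, rfl⟩ : ∃ a' : Fin k, a = Fin.natAdd j a' :=
      ⟨⟨a - j, by omega⟩, Fin.ext (by simp; omega)⟩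
    obtain ⟨b, rfl⟩ : ∃ b' : Fin k, b = Fin.natAdd j b' :=
      ⟨⟨b - j, by omega⟩, Fin.ext (by simp; omega)⟩
    exact h₂ (by simpa using hab)

theorem IsShuffle.mul_blockPerm_eq {σ : Perm (Fin (j + k))} (hσ : IsShuffle j k σ)
    {α : Perm (Fin j)} {β : Perm (Fin k)} (h : IsShuffle j k (σ * blockPerm α β)) :
    σ * blockPerm α β = σ := by
  rw [isShuffle_iff] at hσ h
  have first : (σ ∘ Fin.castAdd k) ∘ α = σ ∘ Fin.castAdd k :=
    Tuple.unique_monotone (τ := 1) (by simpa [Function.comp_def] using h.1.monotone)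
      hσ.1.monotone
  have second : (σ ∘ Fin.natAdd j) ∘ β = σ ∘ Fin.natAdd j :=
    Tuple.unique_monotone (τ := 1) (by simpa [Function.comp_def] using h.2.monotone)
      hσ.2.monotone
  ext i : 1
  induction i using Fin.addCases with
  | left i => simpa using congrFun first i
  | right i => simpa using congrFun second i

theorem isShuffle_mul_blockPerm_sort (ρ : Perm (Fin (j + k))) :
    IsShuffle j k
      (ρ * blockPerm (Tuple.sort (ρ ∘ Fin.castAdd k)) (Tuple.sort (ρ ∘ Fin.natAdd j))) := by
  rw [isShuffle_iff]
  exact ⟨by simpa [Function.comp_def] using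
      Tuple.strictMono_comp_sort (ρ.injective.comp (Fin.castAdd_injective j k)),
    by simpa [Function.comp_def] using
      Tuple.strictMono_comp_sort (ρ.injective.comp (Fin.natAdd_injective k j))⟩

theorem isComplement_isShuffle_range_blockPermHom :
    Subgroup.IsComplement {σ | IsShuffle j k σ} (blockPermHom j k).range := by
  refine Subgroup.isComplement_iff_existsUnique_inv_mul_mem.mpr fun ρ ↦ ?_
  set b := blockPermHom j k (Tuple.sort (ρ ∘ Fin.castAdd k), Tuple.sort (ρ ∘ Fin.natAdd j))
  have hρb : IsShuffle j k (ρ * b) := isShuffle_mul_blockPerm_sort ρ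
  refine ⟨⟨ρ * b, hρb⟩, ?_, ?_⟩
  · have hb : b ∈ (blockPermHom j k).range := ⟨_, rfl⟩
    simpa only [SetLike.mem_coe, mul_inv_rev, inv_mul_cancel_right] using inv_mem hb
  · rintro ⟨σ, hσ⟩ hσρ
    obtain ⟨⟨α, β⟩, hαβ⟩ : σ⁻¹ * (ρ * b) ∈ (blockPermHom j k).range :=
      mul_assoc σ⁻¹ ρ b ▸ mul_mem hσρ ⟨_, rfl⟩
    have hρb_eq : ρ * b = σ * blockPerm α β := by
      rw [← blockPermHom_apply, hαβ, mul_inv_cancel_left]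
    rw [hρb_eq] at hρb
    exact Subtype.ext (hρb_eq.trans (hσ.mul_blockPerm_eq hρb)).symm

end Shuffle

open scoped Classical in
theorem shuffle_of_invariants_is_invariant_general
    {R : Type*} [CommRing R] (T : ℕ → Type*)
    [∀ k, AddCommGroup (T k)] [∀ k, Module R (T k)]
    -- the (signed) action of the symmetric group on each word-length component
    (act : ∀ k : ℕ, Equiv.Perm (Fin k) → T k →ₗ[R] T k)
    (hact_mul : ∀ k σ τ, act k (σ * τ) = act k σ ∘ₗ act k τ)
    -- concatenation of tensor words
    (conc : ∀ j k : ℕ, T j →ₗ[R] T k →ₗ[R] T (j + k))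
    -- compatibility of the action with concatenation and block permutations
    (hblock : ∀ (j k : ℕ) (σ : Equiv.Perm (Fin j)) (τ : Equiv.Perm (Fin k))
        (x : T j) (y : T k),
      act (j + k) (blockPerm σ τ) (conc j k x y) = conc j k (act j σ x) (act k τ y))
    (j k : ℕ) (x : T j) (y : T k)
    (hx : ∀ σ : Equiv.Perm (Fin j), act j σ x = x)
    (hy : ∀ τ : Equiv.Perm (Fin k), act k τ y = y) :
    ∀ π : Equiv.Perm (Fin (j + k)),
      act (j + k) π
        (∑ σ ∈ Finset.univ.filter (IsShuffle j k), act (j + k) σ (conc j k x y))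
      = ∑ σ ∈ Finset.univ.filter (IsShuffle j k), act (j + k) σ (conc j k x y) := by
  have hfixed : ∀ b ∈ (blockPermHom j k).range,
      act (j + k) b (conc j k x y) = conc j k x y := by
    rintro _ ⟨⟨σ, τ⟩, rfl⟩
    rw [blockPermHom_apply, hblock, hx, hy]
  have hS : Subgroup.IsComplement (Finset.univ.filter (IsShuffle j k) : Set _)
      ((blockPermHom j k).range : Set (Equiv.Perm (Fin (j + k)))) := by
    simpa using isComplement_isShuffle_range_blockPermHom
  exact hS.act_sum_eq_sum_of_fixed (act (j + k))
    (fun σ τ ↦ LinearMap.congr_fun (hact_mul _ σ τ)) hfixed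

open scoped Classical in
/-- Let `V` be a free graded module and `Γ^k(V) ⊆ T_C^k(V)` the fixed
points of the signed action of the symmetric group `S_k`.  Then
`Γ(V) = ⊕_k Γ^k(V)` is closed under the shuffle product of `T_C(V)`.  Here the
word-length components `T k = T_C^k(V)` carry any (e.g. the Koszul-signed)
linear `S_k`-action `act`, `conc` is the concatenation pairing, compatible with
block permutations, and the shuffle product of `x` and `y` is
`Σ_{(j,k)-shuffles σ} σ · (x·y)`.  The claim: the shuffle product of two invariant
tensors is invariant. -/
theorem shuffle_of_invariants_is_invariant
    {R : Type*} [CommRing R] (T : ℕ → Type*)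
    [∀ k, AddCommGroup (T k)] [∀ k, Module R (T k)]
    -- the (signed) action of the symmetric group on each word-length component
    (act : ∀ k : ℕ, Equiv.Perm (Fin k) → T k →ₗ[R] T k)
    (hact_one : ∀ k, act k 1 = LinearMap.id)
    (hact_mul : ∀ k σ τ, act k (σ * τ) = act k σ ∘ₗ act k τ)
    -- concatenation of tensor words
    (conc : ∀ j k : ℕ, T j →ₗ[R] T k →ₗ[R] T (j + k))
    -- compatibility of the action with concatenation and block permutations
    (hblock : ∀ (j k : ℕ) (σ : Equiv.Perm (Fin j)) (τ : Equiv.Perm (Fin k))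
        (x : T j) (y : T k),
      act (j + k) (blockPerm σ τ) (conc j k x y) = conc j k (act j σ x) (act k τ y))
    (j k : ℕ) (x : T j) (y : T k)
    (hx : ∀ σ : Equiv.Perm (Fin j), act j σ x = x)
    (hy : ∀ τ : Equiv.Perm (Fin k), act k τ y = y) :
    ∀ π : Equiv.Perm (Fin (j + k)),
      act (j + k) π
        (∑ σ ∈ Finset.univ.filter (IsShuffle j k), act (j + k) σ (conc j k x y))
      = ∑ σ ∈ Finset.univ.filter (IsShuffle j k), act (j + k) σ (conc j k x y) :=
  shuffle_of_invariants_is_invariant_general T act hact_mul conc hblock j k x y hx hy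
end

section
/- Let (UL, ∂) be a differential graded Hopf algebra over F_p of finite type whose underlying Hopf algebra is the universal enveloping algebra of a connected graded Lie algebra L, so that (UL)^♯ ≅ ΓV as an algebra for V = L^♯. If the dual differential ∂^♯ on ΓV is a Γ-derivation, then ∂(L) ⊆ L, i.e., L is a sub-differential-graded-Lie-algebra of (UL, ∂). -/
/-!
`ker π` is spanned by `1`, products of two augmentation-ideal elements and higher divided
powers `γ^k(v)`. A Γ-derivation sends each of these generators to an element of the same kind:
`θ 1 = 0`, the Leibniz rule turns a product into a sum of products, and `θ (γ^k v) = θ v · γ^{k-1} v`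
is again a product of augmentation-ideal elements. So `θ` preserves `ker π`, and since `θ` is
adjoint to `∂` up to sign, `∂` preserves the annihilator `L` of `ker π`.
-/

section GammaDerivation

variable {R G : Type*} [Ring R] [Ring G] [Module R G]

def gammaDecomposables (I : Ideal G) (Vev : Set G) (γ : ℕ → G → G) : Set G :=
  {1} ∪ {x | ∃ u ∈ I, ∃ w ∈ I, x = u * w} ∪ {x | ∃ v ∈ Vev, ∃ k : ℕ, 2 ≤ k ∧ x = γ k v}

lemma span_gammaDecomposables_le_comap (I : Ideal G) (Vev : Set G) (γ : ℕ → G → G)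
    (hVI : ∀ v ∈ Vev, v ∈ I) (hγI : ∀ v ∈ Vev, ∀ k : ℕ, 1 ≤ k → γ k v ∈ I)
    (θ : G →ₗ[R] G) (hone : θ 1 = 0)
    (hLeib : ∀ u w : G, ∃ s : ℤˣ, θ (u * w) = θ u * w + (s : ℤ) • (u * θ w))
    (hθγ : ∀ v ∈ Vev, ∀ k : ℕ, 1 ≤ k → θ (γ k v) = θ v * γ (k - 1) v)
    (hθI : ∀ u ∈ I, θ u ∈ I) :
    Submodule.span R (gammaDecomposables I Vev γ) ≤
      (Submodule.span R (gammaDecomposables I Vev γ)).comap θ := by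
  have mem_of_mul {u w : G} (hu : u ∈ I) (hw : w ∈ I) :
      u * w ∈ Submodule.span R (gammaDecomposables I Vev γ) :=
    Submodule.subset_span (Or.inl (Or.inr ⟨u, hu, w, hw, rfl⟩))
  rw [Submodule.span_le]
  rintro x ((rfl | ⟨u, hu, w, hw, rfl⟩) | ⟨v, hv, k, hk, rfl⟩)
  · simp [hone]
  · obtain ⟨s, hs⟩ := hLeib u w
    simp only [SetLike.mem_coe, Submodule.mem_comap, hs]
    exact add_mem (mem_of_mul (hθI u hu) hw) (zsmul_mem (mem_of_mul hu (hθI w hw)) _)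
  · simp only [SetLike.mem_coe, Submodule.mem_comap, hθγ v hv k (by omega)]
    exact mem_of_mul (hθI v (hVI v hv)) (hγI v hv (k - 1) (by omega))

end GammaDerivation

lemma apply_mem_annihilator_of_adjoint_up_to_sign {R A G : Type*} [CommRing R]
    [AddCommGroup A] [Module R A] (P : G → Module.Dual R A) (K : Set G) (θ : G → G)
    (dA : A → A) (hθK : ∀ g ∈ K, θ g ∈ K)
    (hadj : ∀ g a, ∃ s : ℤˣ, P (θ g) a = (s : ℤ) • P g (dA a))
    {a : A} (ha : ∀ g ∈ K, P g a = 0) : ∀ g ∈ K, P g (dA a) = 0 := by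
  intro g hg
  obtain ⟨s, hs⟩ := hadj g a
  rwa [ha (θ g) (hθK g hg), eq_comm, ← Units.smul_def, smul_eq_zero_iff_eq] at hs

theorem dgl_sub_of_dual_gamma_derivation_general
    (p : ℕ)
    {A G V : Type*}                    -- A = UL, G = ΓV, V = L^♯
    [Ring A] [Algebra (ZMod p) A]
    [CommRing G] [Algebra (ZMod p) G]
    [AddCommGroup V] [Module (ZMod p) V]
    (L : Submodule (ZMod p) A)         -- the graded Lie algebra inside UL
    (dA : A →ₗ[ZMod p] A)               -- the differential of UL
    (P : G →ₗ[ZMod p] Module.Dual (ZMod p) A)  -- the pairing (UL)^♯ ≅ ΓV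
    (π : G →ₗ[ZMod p] V)               -- projection ΓV → V
    (I : Ideal G)                      -- augmentation ideal of ΓV
    (Vev : Set G)                      -- elements of V ⊆ ΓV of even nonzero degree
    (γ : ℕ → G → G)                    -- divided power operations
    (hVI : ∀ v ∈ Vev, v ∈ I)
    (hγI : ∀ v ∈ Vev, ∀ k : ℕ, 1 ≤ k → γ k v ∈ I)
    (hker : LinearMap.ker π =
      Submodule.span (ZMod p) ({(1 : G)}
        ∪ {x : G | ∃ u ∈ I, ∃ w ∈ I, x = u * w}
        ∪ {x : G | ∃ v ∈ Vev, ∃ k : ℕ, 2 ≤ k ∧ x = γ k v}))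
    -- L is the annihilator of ker π under the pairing
    (hL : ∀ a : A, a ∈ L ↔ ∀ g ∈ LinearMap.ker π, P g a = 0)
    (θ : G →ₗ[ZMod p] G)               -- the dual differential ∂^♯
    (hθdual : ∀ (g : G) (a : A), ∃ s : ℤˣ, P (θ g) a = (s : ℤ) • P g (dA a))
    -- ∂^♯ is a Γ-derivation:
    (hone : θ 1 = 0)
    (hLeib : ∀ u w : G, ∃ s : ℤˣ, θ (u * w) = θ u * w + (s : ℤ) • (u * θ w))
    (hθγ : ∀ v ∈ Vev, ∀ k : ℕ, 1 ≤ k → θ (γ k v) = θ v * γ (k - 1) v)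
    (hθI : ∀ u ∈ I, θ u ∈ I) :
    ∀ a ∈ L, dA a ∈ L := by
  have hθker : LinearMap.ker π ≤ (LinearMap.ker π).comap θ := by
    rw [hker]
    exact span_gammaDecomposables_le_comap I Vev γ hVI hγI θ hone hLeib hθγ hθI
  intro a ha
  rw [hL] at ha ⊢
  exact apply_mem_annihilator_of_adjoint_up_to_sign P _ θ dA hθker hθdual ha

/-- Let `(UL, ∂)` be a differential graded Hopf algebra over
`F_p = ZMod p` of finite type whose underlying Hopf algebra is the universal
enveloping algebra of a connected graded Lie algebra `L` (modelled by a submodule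
`L ⊆ UL`), so that the graded dual `(UL)^♯` is identified, via a perfect pairing
`P : ΓV ⊗ UL → F_p`, with the free divided powers algebra `ΓV` on `V = L^♯`; the
inclusion `L ↪ UL` is dual to the projection `π : ΓV → V`, so that `L` is exactly
the annihilator of `ker π`, and `ker π` is spanned by `1`, products of two elements
of the augmentation ideal, and higher divided powers `γ^k(v)`, `k ≥ 2`. If the dual
differential `∂^♯` on `ΓV` is a Γ-derivation, then `∂(L) ⊆ L`, i.e. `L` is a
sub-differential-graded-Lie-algebra of `(UL, ∂)`. -/
theorem dgl_sub_of_dual_gamma_derivation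
    (p : ℕ) [Fact p.Prime]
    {A G V : Type*}                    -- A = UL, G = ΓV, V = L^♯
    [Ring A] [Algebra (ZMod p) A] [Module.Finite (ZMod p) A]
    [CommRing G] [Algebra (ZMod p) G]
    [AddCommGroup V] [Module (ZMod p) V]
    (L : Submodule (ZMod p) A)         -- the graded Lie algebra inside UL
    (dA : A →ₗ[ZMod p] A)               -- the differential of UL
    (hdsq : ∀ a, dA (dA a) = 0)
    (hdLeib : ∀ a b : A, ∃ s : ℤˣ, dA (a * b) = dA a * b + (s : ℤ) • (a * dA b))
    (P : G →ₗ[ZMod p] Module.Dual (ZMod p) A)  -- the pairing (UL)^♯ ≅ ΓV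
    (hP : Function.Bijective P)
    (π : G →ₗ[ZMod p] V)               -- projection ΓV → V
    (I : Ideal G)                      -- augmentation ideal of ΓV
    (Vev : Set G)                      -- elements of V ⊆ ΓV of even nonzero degree
    (γ : ℕ → G → G)                    -- divided power operations
    (hVI : ∀ v ∈ Vev, v ∈ I)
    (hγI : ∀ v ∈ Vev, ∀ k : ℕ, 1 ≤ k → γ k v ∈ I)
    (hker : LinearMap.ker π =
      Submodule.span (ZMod p) ({(1 : G)}
        ∪ {x : G | ∃ u ∈ I, ∃ w ∈ I, x = u * w}
        ∪ {x : G | ∃ v ∈ Vev, ∃ k : ℕ, 2 ≤ k ∧ x = γ k v}))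
    -- L is the annihilator of ker π under the pairing
    (hL : ∀ a : A, a ∈ L ↔ ∀ g ∈ LinearMap.ker π, P g a = 0)
    (θ : G →ₗ[ZMod p] G)               -- the dual differential ∂^♯
    (hθdual : ∀ (g : G) (a : A), ∃ s : ℤˣ, P (θ g) a = (s : ℤ) • P g (dA a))
    -- ∂^♯ is a Γ-derivation:
    (hone : θ 1 = 0)
    (hLeib : ∀ u w : G, ∃ s : ℤˣ, θ (u * w) = θ u * w + (s : ℤ) • (u * θ w))
    (hθγ : ∀ v ∈ Vev, ∀ k : ℕ, 1 ≤ k → θ (γ k v) = θ v * γ (k - 1) v)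
    (hθI : ∀ u ∈ I, θ u ∈ I) :
    ∀ a ∈ L, dA a ∈ L :=
  dgl_sub_of_dual_gamma_derivation_general p L dA P π I Vev γ hVI hγI hker hL θ hθdual hone hLeib
    hθγ hθI
end

section
/- Let L_ab(a,b,c) be the abelian graded Lie algebra over F_p with |a| = 2np−1, |b| = 2np, |c| = 2n (n ≥ 1, p odd). The Hopf algebra automorphism ψ of U L_ab(a,b,c) determined by a ↦ a, c ↦ c, b ↦ b + c^p is a well-defined Hopf algebra isomorphism, but is not of the form Uθ for any Lie algebra endomorphism θ of L_ab(a,b,c). -/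
set_option synthInstance.maxHeartbeats 400000
set_option maxHeartbeats 1000000

open TensorProduct

/-- `U L_ab(a,b,c) = Λ(a) ⊗ F_p[b,c]`: the free graded-commutative Hopf algebra over
`F_p` on a primitive generator `a` of odd degree `2np−1` and primitive generators
`b, c` of even degrees `2np`, `2n`; modelled as `F_p[b,c] ⊕ F_p[b,c]·a`
(so `a² = 0`). Here `b = inl (X 0)`, `c = inl (X 1)`, `a = inr 1`. -/
noncomputable abbrev ULabc (p : ℕ) : Type :=
  TrivSqZeroExt (MvPolynomial (Fin 2) (ZMod p)) (MvPolynomial (Fin 2) (ZMod p))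

/-- The algebra endomorphism of `F_p[b,c]` with `b ↦ b + c^p`, `c ↦ c`. -/
noncomputable def sigmaBC (p : ℕ) :
    MvPolynomial (Fin 2) (ZMod p) →ₐ[ZMod p] MvPolynomial (Fin 2) (ZMod p) :=
  MvPolynomial.aeval ![MvPolynomial.X 0 + (MvPolynomial.X 1) ^ p, MvPolynomial.X 1]

/-- The map `ψ : U L_ab(a,b,c) → U L_ab(a,b,c)` determined by
`a ↦ a`, `b ↦ b + c^p`, `c ↦ c`. -/
noncomputable def psiHopf (p : ℕ) : ULabc p →ₗ[ZMod p] ULabc p :=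
  ((Algebra.linearMap (MvPolynomial (Fin 2) (ZMod p)) (ULabc p)).restrictScalars
      (ZMod p)) ∘ₗ (sigmaBC p).toLinearMap ∘ₗ
    (TrivSqZeroExt.fstHom (ZMod p) (MvPolynomial (Fin 2) (ZMod p))
      (MvPolynomial (Fin 2) (ZMod p))).toLinearMap
  + ((TrivSqZeroExt.inrHom (MvPolynomial (Fin 2) (ZMod p))
        (MvPolynomial (Fin 2) (ZMod p))).restrictScalars (ZMod p)) ∘ₗ
      (sigmaBC p).toLinearMap ∘ₗ
      ((TrivSqZeroExt.sndHom (MvPolynomial (Fin 2) (ZMod p))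
        (MvPolynomial (Fin 2) (ZMod p))).restrictScalars (ZMod p))

/-- The subspace `L_ab(a,b,c) ⊆ U L_ab(a,b,c)` spanned by the generators. -/
noncomputable def Labc (p : ℕ) : Submodule (ZMod p) (ULabc p) :=
  Submodule.span (ZMod p)
    {TrivSqZeroExt.inr 1, TrivSqZeroExt.inl (MvPolynomial.X 0),
      TrivSqZeroExt.inl (MvPolynomial.X 1)}

/-!
`U L_ab(a,b,c) = F_p[b,c] ⊕ F_p[b,c]·a`, and `ψ` acts by the shear `σ : b ↦ b + c^p, c ↦ c`
on both summands; `σ` is invertible with inverse `b ↦ b - c^p`, so `ψ` is an algebra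
automorphism. Both `Δ ∘ ψ` and `(ψ ⊗ ψ) ∘ Δ` are algebra maps, so they agree as soon as
they agree on the generators `a, b, c`, i.e. as soon as `ψ` sends them to primitive
elements; for `ψ b = b + c^p` this is Frobenius: `(c ⊗ 1 + 1 ⊗ c)^p = c^p ⊗ 1 + 1 ⊗ c^p`
in characteristic `p`. Finally, the coefficient of `c^p` in the polynomial part is a linear
form that vanishes on `L_ab(a,b,c)` (as `p ≠ 1`) but not on `ψ b`, so `ψ` does not preserve
`L_ab(a,b,c)`.
-/

open MvPolynomial TrivSqZeroExt

namespace TrivSqZeroExt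

variable {S A B : Type*} [CommSemiring S] [CommSemiring A] [CommSemiring B]
  [Algebra S A] [Algebra S B]

noncomputable def mapOfAlgHom (σ : A →ₐ[S] B) :
    TrivSqZeroExt A A →ₐ[S] TrivSqZeroExt B B where
  toFun z := inl (σ z.fst) + inr (σ z.snd)
  map_one' := by ext <;> simp
  map_mul' z w := by ext <;> simp [mul_comm]
  map_zero' := by ext <;> simp
  map_add' z w := by ext <;> simp
  commutes' r := by ext <;> simp [algebraMap_eq_inl']

@[simp] lemma fst_mapOfAlgHom (σ : A →ₐ[S] B) (z : TrivSqZeroExt A A) :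
    (mapOfAlgHom σ z).fst = σ z.fst := by
  simp [mapOfAlgHom]

@[simp] lemma snd_mapOfAlgHom (σ : A →ₐ[S] B) (z : TrivSqZeroExt A A) :
    (mapOfAlgHom σ z).snd = σ z.snd := by
  simp [mapOfAlgHom]

lemma mapOfAlgHom_bijective {σ : A →ₐ[S] B} (hσ : Function.Bijective σ) :
    Function.Bijective (mapOfAlgHom σ) := by
  refine ⟨fun z w h => ?_, fun z => ?_⟩
  · ext
    · exact hσ.1 (by simpa using congrArg fst h)
    · exact hσ.1 (by simpa using congrArg snd h)
  · obtain ⟨a, ha⟩ := hσ.2 z.fst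
    obtain ⟨b, hb⟩ := hσ.2 z.snd
    exact ⟨inl a + inr b, by ext <;> simp [ha, hb]⟩

lemma adjoin_insert_inr_one_image_inl {s : Set A} (hs : Algebra.adjoin S s = ⊤) :
    Algebra.adjoin S (insert (inr 1) (inl '' s) : Set (TrivSqZeroExt A A)) = ⊤ := by
  refine top_unique fun z _ => ?_
  have hinl : ∀ a : A, (inl a : TrivSqZeroExt A A) ∈
      Algebra.adjoin S (insert (inr 1) (inl '' s) : Set (TrivSqZeroExt A A)) := by
    intro a
    have : inl a ∈ Algebra.adjoin S (inlAlgHom S A A '' s) := by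
      rw [Algebra.adjoin_image, hs]
      exact ⟨a, trivial, rfl⟩
    exact Algebra.adjoin_mono (Set.subset_insert _ _) this
  rw [← z.inl_fst_add_inr_snd_eq, ← mul_one z.snd, ← smul_eq_mul, ← inl_mul_inr]
  exact add_mem (hinl _) (mul_mem (hinl _) (Algebra.subset_adjoin (Set.mem_insert _ _)))

end TrivSqZeroExt

lemma aeval_shear_bijective (R : Type*) [CommRing R] (n : ℕ) :
    Function.Bijective (aeval (R := R) ![(X 0 + X 1 ^ n : MvPolynomial (Fin 2) R), X 1]) := by
  refine (AlgEquiv.ofAlgHom (aeval ![X 0 + X 1 ^ n, X 1])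
    (aeval ![(X 0 - X 1 ^ n : MvPolynomial (Fin 2) R), X 1]) ?_ ?_).bijective <;>
  · ext i : 1
    fin_cases i <;> simp

section Primitive

variable {R A : Type*} [CommSemiring R] [CommSemiring A] [Algebra R A]

def IsPrimitive (Δ : A →ₐ[R] (A ⊗[R] A)) (x : A) : Prop :=
  Δ x = x ⊗ₜ 1 + 1 ⊗ₜ x

variable {Δ : A →ₐ[R] (A ⊗[R] A)}

lemma IsPrimitive.add {x y : A} (hx : IsPrimitive Δ x) (hy : IsPrimitive Δ y) :
    IsPrimitive Δ (x + y) := by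
  unfold IsPrimitive at *
  rw [map_add, hx, hy, TensorProduct.add_tmul, TensorProduct.tmul_add]
  abel

lemma add_pow_prime_of_charP_algebra {p : ℕ} [hp : Fact p.Prime] {S B : Type*} [CommSemiring S]
    [CharP S p] [CommSemiring B] [Algebra S B] (x y : B) : (x + y) ^ p = x ^ p + y ^ p := by
  have hpB : (p : B) = 0 := by
    rw [← map_natCast (algebraMap S B), CharP.cast_eq_zero, map_zero]
  simp [add_pow_prime_eq hp.out, hpB]

lemma IsPrimitive.pow_prime {p : ℕ} [Fact p.Prime] [CharP R p] {x : A}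
    (hx : IsPrimitive Δ x) : IsPrimitive Δ (x ^ p) := by
  rw [IsPrimitive, map_pow, hx, add_pow_prime_of_charP_algebra (S := R),
    Algebra.TensorProduct.tmul_pow, Algebra.TensorProduct.tmul_pow, one_pow]

lemma IsPrimitive.apply_eq_map {f : A →ₐ[R] A} {x : A} (hx : IsPrimitive Δ x)
    (hfx : IsPrimitive Δ (f x)) : Δ (f x) = Algebra.TensorProduct.map f f (Δ x) := by
  rw [hfx, hx, map_add, Algebra.TensorProduct.map_tmul, Algebra.TensorProduct.map_tmul,
    map_one]

lemma comp_eq_map_comp_of_isPrimitive {s : Set A} (hs : Algebra.adjoin R s = ⊤)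
    (f : A →ₐ[R] A) (hprim : ∀ x ∈ s, IsPrimitive Δ x ∧ IsPrimitive Δ (f x)) :
    Δ.comp f = (Algebra.TensorProduct.map f f).comp Δ :=
  AlgHom.ext_of_adjoin_eq_top hs fun x hx => (hprim x hx).1.apply_eq_map (hprim x hx).2

end Primitive

section ULabc

variable (p : ℕ)

lemma coe_psiHopf : ⇑(psiHopf p) = mapOfAlgHom (sigmaBC p) := by
  ext z <;> simp [psiHopf, algebraMap_eq_inl']

lemma psiHopf_eq_toLinearMap : psiHopf p = (mapOfAlgHom (sigmaBC p)).toLinearMap :=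
  LinearMap.coe_injective (coe_psiHopf p)

lemma psiHopf_inr_one : psiHopf p (inr 1) = inr 1 := by
  ext <;> simp [coe_psiHopf]

lemma psiHopf_inl_X_zero : psiHopf p (inl (X 0)) = inl (X 0 + X 1 ^ p) := by
  ext <;> simp [coe_psiHopf, sigmaBC]

lemma psiHopf_inl_X_one : psiHopf p (inl (X 1)) = inl (X 1) := by
  ext <;> simp [coe_psiHopf, sigmaBC]

lemma psiHopf_bijective : Function.Bijective (psiHopf p) := by
  rw [coe_psiHopf]
  exact mapOfAlgHom_bijective (aeval_shear_bijective (ZMod p) p)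

lemma adjoin_generators_eq_top :
    Algebra.adjoin (ZMod p) ({inr 1, inl (X 0), inl (X 1)} : Set (ULabc p)) = ⊤ := by
  have hX : Algebra.adjoin (ZMod p) ({X 0, X 1} : Set (MvPolynomial (Fin 2) (ZMod p))) = ⊤ := by
    rw [← adjoin_range_X]
    congr 1
    ext f
    simp [Fin.exists_fin_two, eq_comm]
  simpa [Set.image_insert_eq] using adjoin_insert_inr_one_image_inl hX

lemma comp_mapOfAlgHom_sigmaBC_of_isPrimitive [Fact p.Prime]
    {Δ : ULabc p →ₐ[ZMod p] (ULabc p ⊗[ZMod p] ULabc p)}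
    (hprim : ∀ g ∈ ({inr 1, inl (X 0), inl (X 1)} : Set (ULabc p)), IsPrimitive Δ g) :
    Δ.comp (mapOfAlgHom (sigmaBC p)) =
      (Algebra.TensorProduct.map (mapOfAlgHom (sigmaBC p)) (mapOfAlgHom (sigmaBC p))).comp Δ := by
  have ha := hprim _ (.inl rfl)
  have hb := hprim _ (.inr (.inl rfl))
  have hc := hprim _ (.inr (.inr rfl))
  refine comp_eq_map_comp_of_isPrimitive (adjoin_generators_eq_top p) _
    fun g hg => ⟨hprim g hg, ?_⟩
  rw [← coe_psiHopf]
  rcases hg with rfl | rfl | rfl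
  · rw [psiHopf_inr_one]
    exact ha
  · rw [psiHopf_inl_X_zero, inl_add, ← inl_pow]
    exact hb.add hc.pow_prime
  · rw [psiHopf_inl_X_one]
    exact hc

lemma coeff_fst_eq_zero_of_mem_Labc (hp : p ≠ 1) {x : ULabc p} (hx : x ∈ Labc p) :
    coeff (Finsupp.single 1 p) x.fst = 0 := by
  induction hx using Submodule.span_induction with
  | mem x hx =>
    rcases hx with rfl | rfl | rfl <;>
      simp [coeff_X, Finsupp.single_eq_single_iff, Ne.symm hp]
  | zero => simp
  | add x y _ _ hx hy => simp [hx, hy]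
  | smul a x _ hx => simp [hx]

lemma inl_X_zero_add_X_one_pow_notMem_Labc (hp : p ≠ 1) :
    (inl (X 0 + X 1 ^ p) : ULabc p) ∉ Labc p := fun h => by
  have := ZMod.nontrivial_iff.mpr hp
  simpa [coeff_X, coeff_X_pow, Finsupp.single_eq_single_iff] using
    coeff_fst_eq_zero_of_mem_Labc p hp h

end ULabc

theorem psiHopf_not_induced_general (p : ℕ) [Fact p.Prime] :
    -- ψ is a unital multiplicative bijection, i.e. an algebra isomorphism
    (psiHopf p 1 = 1) ∧
    (∀ z w : ULabc p, psiHopf p (z * w) = psiHopf p z * psiHopf p w) ∧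
    Function.Bijective (psiHopf p) ∧
    -- ψ sends a ↦ a, b ↦ b + c^p, c ↦ c
    (psiHopf p (TrivSqZeroExt.inr 1) = TrivSqZeroExt.inr 1) ∧
    (psiHopf p (TrivSqZeroExt.inl (MvPolynomial.X 0))
      = TrivSqZeroExt.inl (MvPolynomial.X 0 + (MvPolynomial.X 1) ^ p)) ∧
    (psiHopf p (TrivSqZeroExt.inl (MvPolynomial.X 1))
      = TrivSqZeroExt.inl (MvPolynomial.X 1)) ∧
    -- ψ is a morphism of Hopf algebras: it commutes with any comultiplication
    -- (a multiplicative unital map) for which a, b, c are primitive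
    (∀ Δ : ULabc p →ₗ[ZMod p] (ULabc p ⊗[ZMod p] ULabc p),
      (∀ z w, Δ (z * w) = Δ z * Δ w) → Δ 1 = 1 →
      (∀ g : ULabc p, g = TrivSqZeroExt.inr 1 ∨
          g = TrivSqZeroExt.inl (MvPolynomial.X 0) ∨
          g = TrivSqZeroExt.inl (MvPolynomial.X 1) →
        Δ g = g ⊗ₜ[ZMod p] 1 + 1 ⊗ₜ[ZMod p] g) →
      ∀ z, Δ (psiHopf p z) = (TensorProduct.map (psiHopf p) (psiHopf p)) (Δ z)) ∧
    -- but ψ is not `Uθ` for a Lie algebra endomorphism θ of `L_ab(a,b,c)`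
    ¬ ∃ θ : ULabc p →ₗ[ZMod p] ULabc p,
        (∀ x ∈ Labc p, θ x ∈ Labc p) ∧ (∀ x ∈ Labc p, psiHopf p x = θ x) := by
  refine ⟨by simp [coe_psiHopf], by simp [coe_psiHopf], psiHopf_bijective p, psiHopf_inr_one p,
    psiHopf_inl_X_zero p, psiHopf_inl_X_one p, fun Δ hmul h1 hprim z => ?_, ?_⟩
  · rw [psiHopf_eq_toLinearMap]
    exact AlgHom.congr_fun
      (comp_mapOfAlgHom_sigmaBC_of_isPrimitive p (Δ := AlgHom.ofLinearMap Δ h1 hmul) hprim) z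
  · rintro ⟨θ, hθ, hψθ⟩
    have hb : inl (X 0) ∈ Labc p := Submodule.subset_span (by simp)
    refine inl_X_zero_add_X_one_pow_notMem_Labc p (Fact.out : p.Prime).ne_one ?_
    rw [← psiHopf_inl_X_zero, hψθ _ hb]
    exact hθ _ hb

/-- For `p` an odd prime (and `n ≥ 1`), the map `ψ` of
`U L_ab(a,b,c)` determined by `a ↦ a`, `c ↦ c`, `b ↦ b + c^p` is a well-defined
Hopf algebra isomorphism (a bijective unital multiplicative map commuting with any
comultiplication making `a, b, c` primitive), but it is not of the form `Uθ` for any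
Lie algebra endomorphism `θ` of `L_ab(a,b,c)`: it does not even map the subspace
`L_ab(a,b,c)` into itself. -/
theorem psiHopf_not_induced (p : ℕ) [Fact p.Prime] (hp : Odd p) :
    -- ψ is a unital multiplicative bijection, i.e. an algebra isomorphism
    (psiHopf p 1 = 1) ∧
    (∀ z w : ULabc p, psiHopf p (z * w) = psiHopf p z * psiHopf p w) ∧
    Function.Bijective (psiHopf p) ∧
    -- ψ sends a ↦ a, b ↦ b + c^p, c ↦ c
    (psiHopf p (TrivSqZeroExt.inr 1) = TrivSqZeroExt.inr 1) ∧
    (psiHopf p (TrivSqZeroExt.inl (MvPolynomial.X 0))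
      = TrivSqZeroExt.inl (MvPolynomial.X 0 + (MvPolynomial.X 1) ^ p)) ∧
    (psiHopf p (TrivSqZeroExt.inl (MvPolynomial.X 1))
      = TrivSqZeroExt.inl (MvPolynomial.X 1)) ∧
    -- ψ is a morphism of Hopf algebras: it commutes with any comultiplication
    -- (a multiplicative unital map) for which a, b, c are primitive
    (∀ Δ : ULabc p →ₗ[ZMod p] (ULabc p ⊗[ZMod p] ULabc p),
      (∀ z w, Δ (z * w) = Δ z * Δ w) → Δ 1 = 1 →
      (∀ g : ULabc p, g = TrivSqZeroExt.inr 1 ∨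
          g = TrivSqZeroExt.inl (MvPolynomial.X 0) ∨
          g = TrivSqZeroExt.inl (MvPolynomial.X 1) →
        Δ g = g ⊗ₜ[ZMod p] 1 + 1 ⊗ₜ[ZMod p] g) →
      ∀ z, Δ (psiHopf p z) = (TensorProduct.map (psiHopf p) (psiHopf p)) (Δ z)) ∧
    -- but ψ is not `Uθ` for a Lie algebra endomorphism θ of `L_ab(a,b,c)`
    ¬ ∃ θ : ULabc p →ₗ[ZMod p] ULabc p,
        (∀ x ∈ Labc p, θ x ∈ Labc p) ∧ (∀ x ∈ Labc p, psiHopf p x = θ x) :=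
  psiHopf_not_induced_general p
end
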